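/- Suppose ∇_h E(ĥ; s, a) = 0 at ĥ = (ĥ^1, …, ĥ^{L-1}) (with ĥ^0 = s), let ẑ be the unique noise vector with ĥ = h(ẑ; W, s), write μ̂^L = g^L(ĥ^{L-1}; W^L), and assume a ≠ μ̂^L. Then for every l ∈ {1, …, L}, ((A*(s) − μ̂^L)/(a − μ̂^L)) · ∇_{W^l} log π_l(ĥ^{l-1}, ĥ^l; W^l) = −(1/(2σ_L²)) · ∇_{W^l} (A*(s) − g^L(h^{L-1}(ẑ; W, s); W^L))² (with ĥ^L = a); i.e., the modified REINFORCE update with G replaced by (A*(s) − μ̂^L)/(a − μ̂^L) equals 1/(2σ_L²) times the gradient-descent update on the squared error, computed by backpropagation through the reparametrized network. -/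

import Mathlib

/-- The multivariate Gaussian density on `ℝⁿ` with mean `μ` and covariance `σ² I`. -/
noncomputable def gaussDensity {n : ℕ} (σ : ℝ) (μ y : EuclideanSpace ℝ (Fin n)) : ℝ :=
  (Real.sqrt (2 * Real.pi * σ ^ 2))⁻¹ ^ n * Real.exp (-‖y - μ‖ ^ 2 / (2 * σ ^ 2))

/-- The scalar Gaussian density with mean `μ` and variance `σ²`. -/
noncomputable def gauss1 (σ μ y : ℝ) : ℝ :=
  (Real.sqrt (2 * Real.pi * σ ^ 2))⁻¹ * Real.exp (-(y - μ) ^ 2 / (2 * σ ^ 2))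

/-- The reparametrization `h^k(z; V, s)`: `h^0(z; V, s) = s` and
`h^{k+1}(z; V, s) = g^{k+1}(h^k(z; V, s); V^{k+1}) + σ_{k+1} z^{k+1}`. -/
noncomputable def reparam (n dpar : ℕ → ℕ)
    (g : (l : ℕ) → EuclideanSpace ℝ (Fin (dpar l)) →
      EuclideanSpace ℝ (Fin (n (l - 1))) → EuclideanSpace ℝ (Fin (n l)))
    (σ : ℕ → ℝ) (V : (l : ℕ) → EuclideanSpace ℝ (Fin (dpar l)))
    (s : EuclideanSpace ℝ (Fin (n 0))) (z : (l : ℕ) → EuclideanSpace ℝ (Fin (n l))) :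
    (k : ℕ) → EuclideanSpace ℝ (Fin (n k))
  | 0 => s
  | (k + 1) => g (k + 1) (V (k + 1)) (reparam n dpar g σ V s z k) + σ (k + 1) • z (k + 1)


/-!
At a stationary point of the energy, the condition `∇_{h^k} E = 0` says that the error signals
`δ^k = (ĥ^k - μ̂^k) / σ_k²` satisfy `δ^k = (∂g^{k+1}/∂h^k)ᵀ δ^{k+1}` and
`δ^{L-1} = ((a - μ̂^L) / σ_L²) ∇g^L`: they are exactly what backpropagation computes from the
output error `(a - μ̂^L) / σ_L²`. Since the noise `ẑ` makes the reparametrized network reproduce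
`ĥ`, the chain rule writes `∇_{W^l} (A* - g^L(h^{L-1}))²` as `-2 (A* - μ̂^L)` times `∇g^L`
backpropagated to `W^l`, whereas `∇_{W^l} log π_l = (∂g^l/∂W^l)ᵀ δ^l` is `(a - μ̂^L) / σ_L²` times
the same vector. The two sides therefore agree up to the scalar identity
`(A* - μ̂) / (a - μ̂) · (a - μ̂) / σ_L² = -(2 σ_L²)⁻¹ · (-2 (A* - μ̂))`.
-/
open Finset RealInnerProductSpace

section Calculus

variable {E : Type*} [NormedAddCommGroup E] [NormedSpace ℝ E]

theorem log_gaussDensity {m : ℕ} {σ : ℝ} (hσ : σ ≠ 0) (μ y : EuclideanSpace ℝ (Fin m)) :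
    Real.log (gaussDensity σ μ y)
      = m * Real.log (Real.sqrt (2 * Real.pi * σ ^ 2))⁻¹ - (2 * σ ^ 2)⁻¹ * ‖y - μ‖ ^ 2 := by
  rw [gaussDensity, Real.log_mul (by positivity) (Real.exp_ne_zero _), Real.log_pow,
    Real.log_exp]
  ring

theorem log_gauss1 {σ : ℝ} (hσ : σ ≠ 0) (μ y : ℝ) :
    Real.log (gauss1 σ μ y)
      = Real.log (Real.sqrt (2 * Real.pi * σ ^ 2))⁻¹ - (2 * σ ^ 2)⁻¹ * (y - μ) ^ 2 := by
  rw [gauss1, Real.log_mul (by positivity) (Real.exp_ne_zero _), Real.log_exp]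
  ring

theorem HasFDerivAt.const_sub_sq {F : E → ℝ} {F' : E →L[ℝ] ℝ} {w : E} (c : ℝ)
    (hF : HasFDerivAt F F' w) :
    HasFDerivAt (fun u => (c - F u) ^ 2) ((-2 * (c - F w)) • F') w := by
  refine ((hF.const_sub c).pow 2).congr_fderiv ?_
  ext v
  simp

theorem HasFDerivAt.log_gaussDensity_mean {m : ℕ} {σ : ℝ} (hσ : σ ≠ 0)
    {F : E → EuclideanSpace ℝ (Fin m)} {F' : E →L[ℝ] EuclideanSpace ℝ (Fin m)} {w : E}
    (y : EuclideanSpace ℝ (Fin m)) (hF : HasFDerivAt F F' w) :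
    HasFDerivAt (fun u => Real.log (gaussDensity σ (F u) y))
      ((innerSL ℝ ((σ ^ 2)⁻¹ • (y - F w))).comp F') w := by
  simp_rw [log_gaussDensity hσ]
  refine (((hF.const_sub y).norm_sq.const_mul (2 * σ ^ 2)⁻¹).const_sub _).congr_fderiv ?_
  ext v
  simp only [mul_inv_rev, map_sub, ContinuousLinearMap.comp_neg, ContinuousLinearMap.sub_comp,
    neg_sub, neg_apply, smul_apply, sub_apply, ContinuousLinearMap.comp_apply, coe_innerSL_apply,
    nsmul_eq_mul, Nat.cast_ofNat, smul_eq_mul, map_smul, ContinuousLinearMap.smul_comp]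
  ring

theorem hasFDerivAt_log_gaussDensity_sample {m : ℕ} {σ : ℝ} (hσ : σ ≠ 0)
    (μ y : EuclideanSpace ℝ (Fin m)) :
    HasFDerivAt (fun x => Real.log (gaussDensity σ μ x)) (-innerSL ℝ ((σ ^ 2)⁻¹ • (y - μ))) y := by
  simp_rw [log_gaussDensity hσ]
  refine ((((hasFDerivAt_id y).sub_const μ).norm_sq.const_mul (2 * σ ^ 2)⁻¹).const_sub
    _).congr_fderiv ?_
  ext v
  simp only [mul_inv_rev, id_eq, map_sub, ContinuousLinearMap.comp_id, neg_apply, smul_apply,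
    sub_apply, coe_innerSL_apply, nsmul_eq_mul, Nat.cast_ofNat, smul_eq_mul, map_smul, neg_inj]
  ring

theorem HasFDerivAt.log_gauss1_mean {σ : ℝ} (hσ : σ ≠ 0) {F : E → ℝ} {F' : E →L[ℝ] ℝ} {w : E}
    (y : ℝ) (hF : HasFDerivAt F F' w) :
    HasFDerivAt (fun u => Real.log (gauss1 σ (F u) y)) (((σ ^ 2)⁻¹ * (y - F w)) • F') w := by
  simp_rw [log_gauss1 hσ]
  refine (((hF.const_sub_sq y).const_mul (2 * σ ^ 2)⁻¹).const_sub _).congr_fderiv ?_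
  ext v
  simp only [mul_inv_rev, neg_mul, neg_apply, smul_apply, smul_eq_mul, mul_neg, neg_neg]
  ring

theorem HasFDerivAt.eq_zero_of_gradient_eq_zero {F : Type*} [NormedAddCommGroup F]
    [InnerProductSpace ℝ F] [CompleteSpace F] {f : F → ℝ} {f' : F →L[ℝ] ℝ} {x : F}
    (hf : HasFDerivAt f f' x) (h : gradient f x = 0) : f' = 0 := by
  rwa [hf.hasGradientAt.gradient, LinearIsometryEquiv.map_eq_zero_iff] at h

theorem smul_gradient_eq_smul_gradient {F : Type*} [NormedAddCommGroup F]
    [InnerProductSpace ℝ F] [CompleteSpace F] {f g : F → ℝ} {f' g' : F →L[ℝ] ℝ} {x : F}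
    {c d : ℝ} (hf : HasFDerivAt f f' x) (hg : HasFDerivAt g g' x)
    (h : ∀ v, c * f' v = d * g' v) : c • gradient f x = d • gradient g x := by
  rw [hf.hasGradientAt.gradient, hg.hasGradientAt.gradient, ← map_smul, ← map_smul]
  congr 1
  ext v
  exact h v

end Calculus

section Network

variable {n dpar : ℕ → ℕ}
  {g : (l : ℕ) → EuclideanSpace ℝ (Fin (dpar l)) →
    EuclideanSpace ℝ (Fin (n (l - 1))) → EuclideanSpace ℝ (Fin (n l))}
  {σ : ℕ → ℝ} {W : (l : ℕ) → EuclideanSpace ℝ (Fin (dpar l))} {s : EuclideanSpace ℝ (Fin (n 0))}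
  {z hhat : (l : ℕ) → EuclideanSpace ℝ (Fin (n l))}

theorem reparam_update_of_lt {l k : ℕ} (w : EuclideanSpace ℝ (Fin (dpar l))) (hkl : k < l) :
    reparam n dpar g σ (Function.update W l w) s z k = reparam n dpar g σ W s z k := by
  induction k with
  | zero => rfl
  | succ k ih =>
    simp only [reparam, Function.update_of_ne (show k + 1 ≠ l by omega), ih (by omega)]

theorem reparam_eq_of_noise {K : ℕ} (hs : hhat 0 = s) (hσ : ∀ k ∈ Icc 1 K, σ k ≠ 0)
    (hz : ∀ k ∈ Icc 1 K, z k = (σ k)⁻¹ • (hhat k - g k (W k) (hhat (k - 1)))) :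
    ∀ k ≤ K, reparam n dpar g σ W s z k = hhat k
  | 0, _ => hs.symm
  | k + 1, hk => by
    have hk' : k + 1 ∈ Icc 1 K := mem_Icc.2 ⟨by omega, hk⟩
    rw [reparam, reparam_eq_of_noise hs hσ hz k (by omega), hz _ hk', smul_smul,
      mul_inv_cancel₀ (hσ _ hk'), one_smul]
    exact add_sub_cancel _ _

variable (g σ W hhat) in
/-- The error signal `δ^k = (ĥ^k - g^k(ĥ^{k-1}; W^k)) / σ_k² = -∇_{h^k} log π_k`. -/
noncomputable def hiddenError (k : ℕ) : EuclideanSpace ℝ (Fin (n k)) :=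
  (σ k ^ 2)⁻¹ • (hhat k - g k (W k) (hhat (k - 1)))

theorem hasFDerivAt_sum_log_gaussDensity_update {M k : ℕ} (hk : k ∈ Icc 1 M)
    (hσ : ∀ j ∈ Icc 1 M, σ j ≠ 0) (hg : ∀ j ∈ Icc 1 M, ∀ w, Differentiable ℝ (g j w)) :
    HasFDerivAt (fun x : EuclideanSpace ℝ (Fin (n k)) => ∑ j ∈ Icc 1 M,
        Real.log (gaussDensity (σ j) (g j (W j) (Function.update hhat k x (j - 1)))
          (Function.update hhat k x j)))
      (-innerSL ℝ (hiddenError g σ W hhat k) +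
        if k + 1 ∈ Icc 1 M then
          ((innerSL ℝ (hiddenError g σ W hhat (k + 1))).comp
            (fderiv ℝ (g (k + 1) (W (k + 1))) (hhat k)) : EuclideanSpace ℝ (Fin (n k)) →L[ℝ] ℝ)
        else 0) (hhat k) := by
  have hterm : ∀ j ∈ Icc 1 M, HasFDerivAt (fun x : EuclideanSpace ℝ (Fin (n k)) =>
        Real.log (gaussDensity (σ j) (g j (W j) (Function.update hhat k x (j - 1)))
          (Function.update hhat k x j)))
      ((if j = k then -innerSL ℝ (hiddenError g σ W hhat k) else 0) +
        if j = k + 1 then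
          ((innerSL ℝ (hiddenError g σ W hhat (k + 1))).comp
            (fderiv ℝ (g (k + 1) (W (k + 1))) (hhat k)) : EuclideanSpace ℝ (Fin (n k)) →L[ℝ] ℝ)
        else 0) (hhat k) := by
    intro j hj
    have hj1 := (mem_Icc.1 hj).1
    by_cases hjk : j = k
    · subst hjk
      rw [if_pos rfl, if_neg (by omega), add_zero]
      simp only [Function.update_self, Function.update_of_ne (show j - 1 ≠ j by omega)]
      exact hasFDerivAt_log_gaussDensity_sample (hσ j hj) _ _
    by_cases hjk1 : j = k + 1
    · subst hjk1
      rw [if_neg hjk, if_pos rfl, zero_add]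
      show HasFDerivAt (fun x => Real.log (gaussDensity (σ (k + 1))
        (g (k + 1) (W (k + 1)) (Function.update hhat k x k)) (Function.update hhat k x (k + 1))))
        _ _
      simp only [Function.update_self, Function.update_of_ne (show k + 1 ≠ k by omega)]
      exact ((hg _ hj _).differentiableAt.hasFDerivAt).log_gaussDensity_mean (hσ _ hj) _
    · rw [if_neg hjk, if_neg hjk1, add_zero]
      simp only [Function.update_of_ne hjk, Function.update_of_ne (show j - 1 ≠ k by omega)]
      exact hasFDerivAt_const _ _
  refine (HasFDerivAt.fun_sum hterm).congr_fderiv ?_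
  rw [sum_add_distrib, sum_ite_eq', sum_ite_eq', if_pos hk]

variable (g σ W hhat) in
/-- The energy `E(h; s, a) - C(s, a)` as a function of the `k`-th hidden layer `h^k = x`, with
every other layer fixed at `hhat`; `gL` is `g^L(·; W^L)`. -/
noncomputable def layerEnergy (L : ℕ) (gL : EuclideanSpace ℝ (Fin (n (L - 1))) → ℝ) (σL a : ℝ)
    (k : ℕ) (x : EuclideanSpace ℝ (Fin (n k))) : ℝ :=
  -((∑ j ∈ Icc 1 (L - 1),
      Real.log (gaussDensity (σ j) (g j (W j) (Function.update hhat k x (j - 1)))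
        (Function.update hhat k x j)))
    + Real.log (gauss1 σL (gL (Function.update hhat k x (L - 1))) a))

theorem inner_hiddenError_eq_inner_hiddenError_succ {L k : ℕ} (hk : k ∈ Icc 1 (L - 1))
    (hk1 : k + 1 ∈ Icc 1 (L - 1)) (hσ : ∀ j ∈ Icc 1 (L - 1), σ j ≠ 0)
    (hg : ∀ j ∈ Icc 1 (L - 1), ∀ w, Differentiable ℝ (g j w))
    {gL : EuclideanSpace ℝ (Fin (n (L - 1))) → ℝ} {σL a C : ℝ}
    (hstat : gradient (fun x => layerEnergy g σ W hhat L gL σL a k x + C) (hhat k) = 0)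
    (v : EuclideanSpace ℝ (Fin (n k))) :
    ⟪hiddenError g σ W hhat k, v⟫
      = ⟪hiddenError g σ W hhat (k + 1), fderiv ℝ (g (k + 1) (W (k + 1))) (hhat k) v⟫ := by
  have hout : HasFDerivAt
      (fun x => Real.log (gauss1 σL (gL (Function.update hhat k x (L - 1))) a))
      (0 : EuclideanSpace ℝ (Fin (n k)) →L[ℝ] ℝ) (hhat k) := by
    simp only [Function.update_of_ne (show L - 1 ≠ k by simp only [mem_Icc] at hk1; omega)]
    exact hasFDerivAt_const _ _
  have h0 := ((((hasFDerivAt_sum_log_gaussDensity_update hk hσ hg).add hout).neg).add_const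
    C).eq_zero_of_gradient_eq_zero hstat
  rw [if_pos hk1] at h0
  have h0v := DFunLike.congr_fun h0 v
  simp only [add_zero, neg_add_rev, neg_neg, add_apply, neg_apply, ContinuousLinearMap.comp_apply,
    coe_innerSL_apply, zero_apply] at h0v
  linarith

theorem inner_hiddenError_eq_output {L : ℕ} (hL : L - 1 ∈ Icc 1 (L - 1))
    (hσ : ∀ j ∈ Icc 1 (L - 1), σ j ≠ 0)
    (hg : ∀ j ∈ Icc 1 (L - 1), ∀ w, Differentiable ℝ (g j w))
    {gL : EuclideanSpace ℝ (Fin (n (L - 1))) → ℝ} (hgL : DifferentiableAt ℝ gL (hhat (L - 1)))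
    {σL : ℝ} (hσL : σL ≠ 0) {a C : ℝ}
    (hstat :
      gradient (fun x => layerEnergy g σ W hhat L gL σL a (L - 1) x + C) (hhat (L - 1)) = 0)
    (v : EuclideanSpace ℝ (Fin (n (L - 1)))) :
    ⟪hiddenError g σ W hhat (L - 1), v⟫
      = (σL ^ 2)⁻¹ * (a - gL (hhat (L - 1))) * fderiv ℝ gL (hhat (L - 1)) v := by
  have hout : HasFDerivAt
      (fun x => Real.log (gauss1 σL (gL (Function.update hhat (L - 1) x (L - 1))) a))
      (((σL ^ 2)⁻¹ * (a - gL (hhat (L - 1)))) • fderiv ℝ gL (hhat (L - 1))) (hhat (L - 1)) := by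
    simp only [Function.update_self]
    exact hgL.hasFDerivAt.log_gauss1_mean hσL a
  have h0 := ((((hasFDerivAt_sum_log_gaussDensity_update hL hσ hg).add hout).neg).add_const
    C).eq_zero_of_gradient_eq_zero hstat
  rw [if_neg (by simp only [mem_Icc]; omega)] at h0
  have h0v := DFunLike.congr_fun h0 v
  simp only [add_zero, neg_add_rev, neg_neg, add_apply, neg_apply, smul_apply, smul_eq_mul,
    coe_innerSL_apply, zero_apply] at h0v
  linarith

theorem exists_hasFDerivAt_reparam_update {K l : ℕ} (hl : 1 ≤ l)
    (hR : ∀ k ≤ K, reparam n dpar g σ W s z k = hhat k)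
    (hgW : DifferentiableAt ℝ (fun w => g l w (hhat (l - 1))) (W l))
    (hgx : ∀ k, l ≤ k → k < K → DifferentiableAt ℝ (g (k + 1) (W (k + 1))) (hhat k))
    (δ : (k : ℕ) → EuclideanSpace ℝ (Fin (n k)))
    (hδ : ∀ k, l ≤ k → k < K → ∀ v,
      ⟪δ k, v⟫ = ⟪δ (k + 1), fderiv ℝ (g (k + 1) (W (k + 1))) (hhat k) v⟫) :
    ∀ k, l ≤ k → k ≤ K →
      ∃ Φ : EuclideanSpace ℝ (Fin (dpar l)) →L[ℝ] EuclideanSpace ℝ (Fin (n k)),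
        HasFDerivAt (fun w => reparam n dpar g σ (Function.update W l w) s z k) Φ (W l) ∧
        ∀ v, ⟪δ k, Φ v⟫ = ⟪δ l, fderiv ℝ (fun w => g l w (hhat (l - 1))) (W l) v⟫ := by
  intro k hlk
  induction k, hlk using Nat.le_induction with
  | base =>
    intro hlK
    obtain ⟨m, rfl⟩ : ∃ m, l = m + 1 := ⟨l - 1, by omega⟩
    refine ⟨_, ?_, fun v => rfl⟩
    simp only [reparam, Function.update_self, reparam_update_of_lt _ (Nat.lt_succ_self m),
      hR m (by omega)]
    exact hgW.hasFDerivAt.add_const _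
  | succ k hlk ih =>
    intro hkK
    obtain ⟨Φ, hΦ, hΦδ⟩ := ih (by omega)
    have hgk : HasFDerivAt (g (k + 1) (W (k + 1))) (fderiv ℝ (g (k + 1) (W (k + 1))) (hhat k))
        (reparam n dpar g σ (Function.update W l (W l)) s z k) := by
      rw [Function.update_eq_self, hR k (by omega)]
      exact (hgx k hlk (by omega)).hasFDerivAt
    refine ⟨(fderiv ℝ (g (k + 1) (W (k + 1))) (hhat k)).comp Φ, ?_, fun v => ?_⟩
    · simp only [reparam, Function.update_of_ne (show k + 1 ≠ l by omega)]
      exact (hgk.comp (W l) hΦ).add_const _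
    · rw [ContinuousLinearMap.comp_apply, ← hδ k hlk (by omega), hΦδ]

end Network

theorem stmt9_general (L : ℕ) (n dpar : ℕ → ℕ)
    (g : (l : ℕ) → EuclideanSpace ℝ (Fin (dpar l)) →
      EuclideanSpace ℝ (Fin (n (l - 1))) → EuclideanSpace ℝ (Fin (n l)))
    (σ : ℕ → ℝ) (hσ : ∀ l ∈ Finset.Icc 1 (L - 1), 0 < σ l)
    (hgdiff₁ : ∀ l ∈ Finset.Icc 1 (L - 1), ∀ w, Differentiable ℝ (g l w))
    (hgdiff₂ : ∀ l ∈ Finset.Icc 1 (L - 1), ∀ x, Differentiable ℝ (fun w => g l w x))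
    (gL : EuclideanSpace ℝ (Fin (dpar L)) → EuclideanSpace ℝ (Fin (n (L - 1))) → ℝ)
    (σL : ℝ) (hσL : 0 < σL)
    (hgLdiff₁ : ∀ w, Differentiable ℝ (gL w))
    (hgLdiff₂ : ∀ x, Differentiable ℝ (fun w => gL w x))
    (Astar : EuclideanSpace ℝ (Fin (n 0)) → ℝ)
    (W : (l : ℕ) → EuclideanSpace ℝ (Fin (dpar l)))
    (s : EuclideanSpace ℝ (Fin (n 0))) (a : ℝ) (C : ℝ)
    (hhat : (l : ℕ) → EuclideanSpace ℝ (Fin (n l))) (hs : hhat 0 = s)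
    (hstat : ∀ k ∈ Finset.Icc 1 (L - 1),
      gradient (fun x : EuclideanSpace ℝ (Fin (n k)) =>
        -((∑ j ∈ Finset.Icc 1 (L - 1),
            Real.log (gaussDensity (σ j) (g j (W j) (Function.update hhat k x (j - 1)))
              (Function.update hhat k x j)))
          + Real.log (gauss1 σL (gL (W L) (Function.update hhat k x (L - 1))) a)) + C)
        (hhat k) = 0)
    (zhat : (l : ℕ) → EuclideanSpace ℝ (Fin (n l)))
    (hzhat : ∀ k ∈ Finset.Icc 1 (L - 1),
      zhat k = (σ k)⁻¹ • (hhat k - g k (W k) (hhat (k - 1))))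
    (hamu : a ≠ gL (W L) (hhat (L - 1))) :
    (∀ l ∈ Finset.Icc 1 (L - 1),
      ((Astar s - gL (W L) (hhat (L - 1))) / (a - gL (W L) (hhat (L - 1)))) •
        gradient (fun w => Real.log (gaussDensity (σ l) (g l w (hhat (l - 1))) (hhat l))) (W l)
        = (-(2 * σL ^ 2)⁻¹) •
          gradient (fun w : EuclideanSpace ℝ (Fin (dpar l)) =>
            (Astar s -
              gL (W L) (reparam n dpar g σ (Function.update W l w) s zhat (L - 1))) ^ 2) (W l))
    ∧ ((Astar s - gL (W L) (hhat (L - 1))) / (a - gL (W L) (hhat (L - 1)))) •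
        gradient (fun w => Real.log (gauss1 σL (gL w (hhat (L - 1))) a)) (W L)
        = (-(2 * σL ^ 2)⁻¹) •
          gradient (fun w =>
            (Astar s - gL w (reparam n dpar g σ W s zhat (L - 1))) ^ 2) (W L) := by
  set μ := gL (W L) (hhat (L - 1))
  have hσ' : ∀ j ∈ Icc 1 (L - 1), σ j ≠ 0 := fun j hj => (hσ j hj).ne'
  have hR : ∀ k ≤ L - 1, reparam n dpar g σ W s zhat k = hhat k :=
    reparam_eq_of_noise hs hσ' hzhat
  have hscale : ∀ t, (Astar s - μ) / (a - μ) * ((σL ^ 2)⁻¹ * (a - μ) * t)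
      = -(2 * σL ^ 2)⁻¹ * (-2 * (Astar s - μ) * t) := by
    intro t
    field_simp [sub_ne_zero.2 hamu]
  refine ⟨fun l hl => ?_, ?_⟩
  · obtain ⟨hl1, hlL⟩ := mem_Icc.1 hl
    obtain ⟨Φ, hΦ, hΦδ⟩ := exists_hasFDerivAt_reparam_update hl1 hR
      (hgdiff₂ l hl _).differentiableAt
      (fun k _ hk => (hgdiff₁ (k + 1) (mem_Icc.2 ⟨by omega, hk⟩) _).differentiableAt)
      (hiddenError g σ W hhat)
      (fun k hlk hk => inner_hiddenError_eq_inner_hiddenError_succ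
        (mem_Icc.2 ⟨by omega, by omega⟩) (mem_Icc.2 ⟨by omega, hk⟩) hσ' hgdiff₁
        (hstat k (mem_Icc.2 ⟨by omega, by omega⟩)))
      (L - 1) hlL le_rfl
    have hgL : HasFDerivAt (gL (W L)) (fderiv ℝ (gL (W L)) (hhat (L - 1)))
        (reparam n dpar g σ (Function.update W l (W l)) s zhat (L - 1)) := by
      rw [Function.update_eq_self, hR _ le_rfl]
      exact (hgLdiff₁ _ _).hasFDerivAt
    refine smul_gradient_eq_smul_gradient
      ((hgdiff₂ l hl _ _).hasFDerivAt.log_gaussDensity_mean (hσ' l hl) _)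
      ((hgL.comp (W l) hΦ).const_sub_sq _) fun v => ?_
    have hδ : ⟪hiddenError g σ W hhat l, fderiv ℝ (fun w => g l w (hhat (l - 1))) (W l) v⟫
        = (σL ^ 2)⁻¹ * (a - μ) * fderiv ℝ (gL (W L)) (hhat (L - 1)) (Φ v) :=
      (hΦδ v).symm.trans <| inner_hiddenError_eq_output (mem_Icc.2 ⟨by omega, le_rfl⟩) hσ'
        hgdiff₁ (hgLdiff₁ _ _) hσL.ne' (hstat _ (mem_Icc.2 ⟨by omega, le_rfl⟩)) (Φ v)
    simp only [ContinuousLinearMap.comp_apply, smul_apply, innerSL_apply_apply,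
      Function.comp_apply, Function.update_eq_self, hR _ le_rfl, smul_eq_mul]
    exact (congrArg _ hδ).trans (hscale _)
  · rw [hR _ le_rfl]
    exact smul_gradient_eq_smul_gradient ((hgLdiff₂ _ _).hasFDerivAt.log_gauss1_mean hσL.ne' a)
      ((hgLdiff₂ _ _).hasFDerivAt.const_sub_sq _) fun v => hscale _

/-- **Theorem 3 of the paper.** Network with normally distributed hidden layers
`π_l = N(·; g^l(h^{l-1}; W^l), σ_l² I)` and a single normally distributed output unit
`π_L(h^{L-1}, a; W^L) = N(a; g^L(h^{L-1}; W^L), σ_L²)`; `A*` is the target-output function.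
Suppose `∇_h E(ĥ; s, a) = 0` (with `ĥ^0 = s`), let `ẑ` be the unique noise vector with
`ĥ = h(ẑ; W, s)`, write `μ̂^L = g^L(ĥ^{L-1}; W^L)`, and assume `a ≠ μ̂^L`.  Then for every
`l ∈ {1, …, L}` (the cases `l ≤ L−1` and `l = L` are the two conjuncts),
`((A*(s) − μ̂^L)/(a − μ̂^L)) ∇_{W^l} log π_l(ĥ^{l-1}, ĥ^l; W^l)
  = −(1/(2σ_L²)) ∇_{W^l} (A*(s) − g^L(h^{L-1}(ẑ; W, s); W^L))²`. -/
theorem stmt9 (L : ℕ) (hL : 1 ≤ L) (n dpar : ℕ → ℕ)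
    (g : (l : ℕ) → EuclideanSpace ℝ (Fin (dpar l)) →
      EuclideanSpace ℝ (Fin (n (l - 1))) → EuclideanSpace ℝ (Fin (n l)))
    (σ : ℕ → ℝ) (hσ : ∀ l ∈ Finset.Icc 1 (L - 1), 0 < σ l)
    (hgdiff₁ : ∀ l ∈ Finset.Icc 1 (L - 1), ∀ w, Differentiable ℝ (g l w))
    (hgdiff₂ : ∀ l ∈ Finset.Icc 1 (L - 1), ∀ x, Differentiable ℝ (fun w => g l w x))
    (gL : EuclideanSpace ℝ (Fin (dpar L)) → EuclideanSpace ℝ (Fin (n (L - 1))) → ℝ)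
    (σL : ℝ) (hσL : 0 < σL)
    (hgLdiff₁ : ∀ w, Differentiable ℝ (gL w))
    (hgLdiff₂ : ∀ x, Differentiable ℝ (fun w => gL w x))
    (Astar : EuclideanSpace ℝ (Fin (n 0)) → ℝ)
    (W : (l : ℕ) → EuclideanSpace ℝ (Fin (dpar l)))
    (s : EuclideanSpace ℝ (Fin (n 0))) (a : ℝ) (C : ℝ)
    (hhat : (l : ℕ) → EuclideanSpace ℝ (Fin (n l))) (hs : hhat 0 = s)
    (hstat : ∀ k ∈ Finset.Icc 1 (L - 1),
      gradient (fun x : EuclideanSpace ℝ (Fin (n k)) =>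
        -((∑ j ∈ Finset.Icc 1 (L - 1),
            Real.log (gaussDensity (σ j) (g j (W j) (Function.update hhat k x (j - 1)))
              (Function.update hhat k x j)))
          + Real.log (gauss1 σL (gL (W L) (Function.update hhat k x (L - 1))) a)) + C)
        (hhat k) = 0)
    (zhat : (l : ℕ) → EuclideanSpace ℝ (Fin (n l)))
    (hzhat : ∀ k ∈ Finset.Icc 1 (L - 1),
      zhat k = (σ k)⁻¹ • (hhat k - g k (W k) (hhat (k - 1))))
    (hamu : a ≠ gL (W L) (hhat (L - 1))) :
    (∀ l ∈ Finset.Icc 1 (L - 1),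
      ((Astar s - gL (W L) (hhat (L - 1))) / (a - gL (W L) (hhat (L - 1)))) •
        gradient (fun w => Real.log (gaussDensity (σ l) (g l w (hhat (l - 1))) (hhat l))) (W l)
        = (-(2 * σL ^ 2)⁻¹) •
          gradient (fun w : EuclideanSpace ℝ (Fin (dpar l)) =>
            (Astar s -
              gL (W L) (reparam n dpar g σ (Function.update W l w) s zhat (L - 1))) ^ 2) (W l))
    ∧ ((Astar s - gL (W L) (hhat (L - 1))) / (a - gL (W L) (hhat (L - 1)))) •
        gradient (fun w => Real.log (gauss1 σL (gL w (hhat (L - 1))) a)) (W L)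
        = (-(2 * σL ^ 2)⁻¹) •
          gradient (fun w =>
            (Astar s - gL w (reparam n dpar g σ W s zhat (L - 1))) ^ 2) (W L) :=
  stmt9_general L n dpar g σ hσ hgdiff₁ hgdiff₂ gL σL hσL hgLdiff₁ hgLdiff₂ Astar W s a C hhat hs
    hstat zhat hzhat hamu
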